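/- Let X be a complex Banach space, n,d ∈ ℕ with 1 ≤ d ≤ n, and p ∈ [1,∞]. Then every function f : {-1,1}^n → X of degree at most d satisfies ‖Δf‖_{L_p({-1,1}^n;X)} ≤ d² · ‖f‖_{L_p({-1,1}^n;X)}. -/

import Mathlib

open scoped BigOperators ENNReal NNReal

noncomputable section

namespace HammingCube

variable {X : Type*} [NormedAddCommGroup X] [NormedSpace ℂ X]

/-- The sign ±1 associated to a boolean coordinate. -/
def sgn (b : Bool) : ℝ := if b then 1 else -1

/-- The Walsh function `w_A(ε) = ∏_{i ∈ A} ε_i`. -/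
def walsh {n : ℕ} (A : Finset (Fin n)) (ε : Fin n → Bool) : ℝ := ∏ i ∈ A, sgn (ε i)

/-- The Fourier–Walsh coefficient `f̂(A) = 2⁻ⁿ ∑_δ f(δ) w_A(δ)`. -/
def coeff {n : ℕ} (f : (Fin n → Bool) → X) (A : Finset (Fin n)) : X :=
  (2 ^ n : ℝ)⁻¹ • ∑ δ : Fin n → Bool, walsh A δ • f δ

/-- `f` has degree at most `d`: `f̂(A) = 0` whenever `|A| > d`. -/
def degLE {n : ℕ} (f : (Fin n → Bool) → X) (d : ℕ) : Prop :=
  ∀ A : Finset (Fin n), d < A.card → coeff f A = 0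

/-- `f` belongs to the `d`-th tail space: `f̂(A) = 0` whenever `|A| < d`. -/
def tailSpace {n : ℕ} (f : (Fin n → Bool) → X) (d : ℕ) : Prop :=
  ∀ A : Finset (Fin n), A.card < d → coeff f A = 0

/-- The heat semigroup `e^{-tΔ} f = ∑_A e^{-t|A|} f̂(A) w_A`. -/
def heat {n : ℕ} (t : ℝ) (f : (Fin n → Bool) → X) : (Fin n → Bool) → X :=
  fun ε => ∑ A : Finset (Fin n), Real.exp (-t * A.card) • walsh A ε • coeff f A

/-- The hypercube Laplacian `Δ f = ∑_A |A| f̂(A) w_A`. -/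
def lap {n : ℕ} (f : (Fin n → Bool) → X) : (Fin n → Bool) → X :=
  fun ε => ∑ A : Finset (Fin n), (A.card : ℝ) • walsh A ε • coeff f A

/-- The fractional Laplacian `Δ^γ f = ∑_A |A|^γ f̂(A) w_A`. -/
def fracLap {n : ℕ} (γ : ℝ) (f : (Fin n → Bool) → X) : (Fin n → Bool) → X :=
  fun ε => ∑ A : Finset (Fin n), ((A.card : ℝ) ^ γ) • walsh A ε • coeff f A

/-- The `i`-th discrete partial derivative. -/
def pderiv {n : ℕ} (i : Fin n) (f : (Fin n → Bool) → X) : (Fin n → Bool) → X :=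
  fun ε => (2 : ℝ)⁻¹ • (f ε - f (Function.update ε i (!(ε i))))

/-- The vector-valued `L_p` norm `(2⁻ⁿ ∑_ε ‖f(ε)‖^p)^{1/p}` for finite `p`. -/
def lpNorm {n : ℕ} {Y : Type*} [NormedAddCommGroup Y] (p : ℝ)
    (f : (Fin n → Bool) → Y) : ℝ :=
  ((2 ^ n : ℝ)⁻¹ * ∑ ε : Fin n → Bool, ‖f ε‖ ^ p) ^ (1 / p)

/-- The `L_∞` norm `max_ε ‖f(ε)‖`. -/
def linfNorm {n : ℕ} {Y : Type*} [NormedAddCommGroup Y]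
    (f : (Fin n → Bool) → Y) : ℝ :=
  ⨆ ε : Fin n → Bool, ‖f ε‖

/-- The `L_p` norm for `p ∈ [1,∞]` encoded as `p : ℝ≥0∞`. -/
def lpNormE {n : ℕ} {Y : Type*} [NormedAddCommGroup Y] (p : ℝ≥0∞)
    (f : (Fin n → Bool) → Y) : ℝ :=
  if p = ⊤ then linfNorm f else lpNorm p.toReal f

/-- The scalar `L_p` norm of the gradient `‖(∑_i |∂_i f|²)^{1/2}‖_{L_p}`. -/
def gradLpNorm {n : ℕ} (p : ℝ) (f : (Fin n → Bool) → ℂ) : ℝ :=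
  lpNorm p (fun ε => Real.sqrt (∑ i : Fin n, ‖pderiv i f ε‖ ^ 2))

/-- The Rademacher projection `Rad f(ε) = ∑_i f̂({i}) ε_i`. -/
def Rad {n : ℕ} (f : (Fin n → Bool) → X) : (Fin n → Bool) → X :=
  fun ε => ∑ i : Fin n, sgn (ε i) • coeff f {i}

/-- A complex Banach space is `K`-convex if the Rademacher projections are uniformly
bounded on `L_q` for some `q ∈ (1,∞)`. -/
def KConvex (X : Type*) [NormedAddCommGroup X] [NormedSpace ℂ X] : Prop :=
  ∃ q : ℝ, 1 < q ∧ ∃ M : ℝ, ∀ (n : ℕ) (f : (Fin n → Bool) → X),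
    lpNorm q (Rad f) ≤ M * lpNorm q f

/-- `X` has cotype `q` with constant `C`. -/
def HasCotype (X : Type*) [NormedAddCommGroup X] [NormedSpace ℂ X] (q C : ℝ) : Prop :=
  ∀ (n : ℕ) (x : Fin n → X),
    C⁻¹ * (∑ i : Fin n, ‖x i‖ ^ q) ^ (1 / q) ≤
      ((2 ^ n : ℝ)⁻¹ * ∑ ε : Fin n → Bool, ‖∑ i : Fin n, sgn (ε i) • x i‖ ^ q) ^ (1 / q)

/-- The entropy `Ent(h)` of a nonnegative function on the cube. -/
def entropy {n : ℕ} (h : (Fin n → Bool) → ℝ) : ℝ :=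
  (2 ^ n : ℝ)⁻¹ * ∑ ε : Fin n → Bool, h ε * Real.log (h ε) -
    ((2 ^ n : ℝ)⁻¹ * ∑ ε : Fin n → Bool, h ε) *
      Real.log ((2 ^ n : ℝ)⁻¹ * ∑ ε : Fin n → Bool, h ε)

/-- The `L_∞` norm of the gradient `max_ε (∑_i |∂_i f(ε)|²)^{1/2}`. -/
def gradLinfNorm {n : ℕ} (f : (Fin n → Bool) → ℂ) : ℝ :=
  ⨆ ε : Fin n → Bool, Real.sqrt (∑ i : Fin n, ‖pderiv i f ε‖ ^ 2)


/-! ### Auxiliary development for the Bernstein–Markov inequality -/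

section Aux

open Finset Polynomial Real

/-- componentwise product of sign vectors (as boolean equality). -/
def bmul {n : ℕ} (ε δ : Fin n → Bool) : Fin n → Bool := fun i => ε i == δ i

lemma sgn_bmul (a b : Bool) : sgn (a == b) = sgn a * sgn b := by
  cases a <;> cases b <;> simp [sgn]

lemma bmul_bmul {n : ℕ} (ε δ : Fin n → Bool) : bmul (bmul ε δ) δ = ε := by
  funext i; simp only [bmul]; cases ε i <;> cases δ i <;> rfl

def bmulEquiv {n : ℕ} (δ : Fin n → Bool) : (Fin n → Bool) ≃ (Fin n → Bool) where
  toFun ε := bmul ε δ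
  invFun ε := bmul ε δ
  left_inv ε := bmul_bmul ε δ
  right_inv ε := bmul_bmul ε δ

lemma walsh_bmul {n : ℕ} (A : Finset (Fin n)) (ε δ : Fin n → Bool) :
    walsh A (bmul ε δ) = walsh A ε * walsh A δ := by
  simp only [walsh, bmul, sgn_bmul, Finset.prod_mul_distrib]

lemma walsh_orth {n : ℕ} (ε δ : Fin n → Bool) :
    ∑ A : Finset (Fin n), walsh A ε * walsh A δ
      = if ε = δ then (2 ^ n : ℝ) else 0 := by
  have h1 : ∀ A : Finset (Fin n), walsh A ε * walsh A δ
      = ∏ i ∈ A, (sgn (ε i) * sgn (δ i)) := by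
    intro A; simp [walsh, Finset.prod_mul_distrib]
  calc ∑ A : Finset (Fin n), walsh A ε * walsh A δ
      = ∑ A ∈ (Finset.univ : Finset (Fin n)).powerset,
          (∏ i ∈ A, (sgn (ε i) * sgn (δ i))) * ∏ i ∈ Finset.univ \ A, (1:ℝ) := by
        rw [Finset.powerset_univ]
        exact Finset.sum_congr rfl fun A _ => by rw [h1]; simp
    _ = ∏ i : Fin n, (sgn (ε i) * sgn (δ i) + 1) := (Finset.prod_add _ _ _).symm
    _ = if ε = δ then (2 ^ n : ℝ) else 0 := by
        by_cases h : ε = δ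
        · subst h
          simp only [if_true]
          have : ∀ i, sgn (ε i) * sgn (ε i) + 1 = 2 := by
            intro i; cases ε i <;> norm_num [sgn]
          rw [Finset.prod_congr rfl fun i _ => this i]
          simp
        · simp only [h, if_false]
          obtain ⟨i, hi⟩ := Function.ne_iff.mp h
          apply Finset.prod_eq_zero (Finset.mem_univ i)
          revert hi; cases ε i <;> cases δ i <;> simp [sgn]

lemma inversion {n : ℕ} (f : (Fin n → Bool) → X) (ε : Fin n → Bool) :
    ∑ A : Finset (Fin n), walsh A ε • coeff f A = f ε := by
  have : ∀ A : Finset (Fin n), walsh A ε • coeff f A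
      = ∑ δ : Fin n → Bool, ((2 ^ n : ℝ)⁻¹ * (walsh A ε * walsh A δ)) • f δ := by
    intro A
    rw [coeff, smul_comm, Finset.smul_sum, Finset.smul_sum]
    exact Finset.sum_congr rfl fun δ _ => by
      rw [smul_smul, smul_smul, mul_assoc]
  rw [Finset.sum_congr rfl fun A _ => this A, Finset.sum_comm]
  have : ∀ δ : Fin n → Bool,
      ∑ A : Finset (Fin n), ((2 ^ n : ℝ)⁻¹ * (walsh A ε * walsh A δ)) • f δ
      = (if ε = δ then (1:ℝ) else 0) • f δ := by
    intro δ
    rw [← Finset.sum_smul, ← Finset.mul_sum, walsh_orth]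
    congr 1
    by_cases h : ε = δ <;> simp [h]
  rw [Finset.sum_congr rfl fun δ _ => this δ]
  simp

/-- the weight of the noise (averaging) operator -/
def wt {n : ℕ} (ρ : ℝ) (δ : Fin n → Bool) : ℝ :=
  ∏ i : Fin n, (if δ i then (1 + ρ) / 2 else (1 - ρ) / 2)

lemma wt_nonneg {n : ℕ} {ρ : ℝ} (hρ : |ρ| ≤ 1) (δ : Fin n → Bool) : 0 ≤ wt ρ δ := by
  rw [abs_le] at hρ
  exact Finset.prod_nonneg fun i _ => by cases δ i <;> simp <;> linarith [hρ.1, hρ.2]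

lemma wt_sum_walsh {n : ℕ} (ρ : ℝ) (A : Finset (Fin n)) :
    ∑ δ : Fin n → Bool, wt ρ δ * walsh A δ = ρ ^ A.card := by
  have key : ∀ δ : Fin n → Bool, wt ρ δ * walsh A δ
      = ∏ i : Fin n, ((if δ i then (1 + ρ) / 2 else (1 - ρ) / 2) *
          (if i ∈ A then sgn (δ i) else 1)) := by
    intro δ
    rw [Finset.prod_mul_distrib, wt, walsh]
    congr 1
    rw [Finset.prod_ite_mem, Finset.univ_inter]
  rw [Finset.sum_congr rfl fun δ _ => key δ]
  have h2 := Finset.sum_prod_piFinset (Finset.univ : Finset Bool)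
    (fun (i : Fin n) (b : Bool) => (if b then (1 + ρ) / 2 else (1 - ρ) / 2) *
      (if i ∈ A then sgn b else 1))
  rw [Fintype.piFinset_univ] at h2
  rw [h2]
  have h3 : ∀ i : Fin n, (∑ b : Bool, (if b then (1 + ρ) / 2 else (1 - ρ) / 2) *
      (if i ∈ A then sgn b else 1)) = if i ∈ A then ρ else 1 := by
    intro i
    by_cases h : i ∈ A <;> simp [h, sgn] <;> ring
  rw [Finset.prod_congr rfl fun i _ => h3 i, Finset.prod_ite_mem, Finset.univ_inter,
    Finset.prod_const]

lemma wt_sum {n : ℕ} (ρ : ℝ) : ∑ δ : Fin n → Bool, wt ρ δ = 1 := by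
  have := wt_sum_walsh (n := n) ρ ∅
  simpa [walsh] using this

/-- the noise (averaging) operator, defined by convolution -/
def noise {n : ℕ} (ρ : ℝ) (f : (Fin n → Bool) → X) : (Fin n → Bool) → X :=
  fun ε => ∑ δ : Fin n → Bool, wt ρ δ • f (bmul ε δ)

lemma noise_eq {n : ℕ} (ρ : ℝ) (f : (Fin n → Bool) → X) (ε : Fin n → Bool) :
    noise ρ f ε = ∑ A : Finset (Fin n), (ρ ^ A.card) • walsh A ε • coeff f A := by
  unfold noise
  have h1 : ∀ δ : Fin n → Bool, wt ρ δ • f (bmul ε δ)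
      = ∑ A : Finset (Fin n), ((wt ρ δ * walsh A δ) * walsh A ε) • coeff f A := by
    intro δ
    rw [← inversion f (bmul ε δ), Finset.smul_sum]
    refine Finset.sum_congr rfl fun A _ => ?_
    rw [walsh_bmul, smul_smul]
    congr 1
    ring
  rw [Finset.sum_congr rfl fun δ _ => h1 δ, Finset.sum_comm]
  refine Finset.sum_congr rfl fun A _ => ?_
  rw [← Finset.sum_smul, ← Finset.sum_mul, wt_sum_walsh, ← smul_smul]

/-! #### `L_p` norm lemmas via `PiLp` -/

lemma lpNormE_eq_norm {n : ℕ} (p : ℝ≥0∞) (hp : 1 ≤ p) (f : (Fin n → Bool) → X) :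
    lpNormE p f = ((2 ^ n : ℝ)⁻¹) ^ (1 / p.toReal) *
      ‖(WithLp.equiv p ((Fin n → Bool) → X)).symm f‖ := by
  haveI : Fact (1 ≤ p) := ⟨hp⟩
  by_cases h : p = ⊤
  · subst h
    rw [lpNormE, if_pos rfl]
    simp only [ENNReal.toReal_top, div_zero, Real.rpow_zero, one_mul]
    rw [PiLp.norm_eq_ciSup]
    rfl
  · have hpt : 0 < p.toReal := ENNReal.toReal_pos (by intro h0; rw [h0] at hp; simp at hp) h
    rw [lpNormE, if_neg h, lpNorm,
      Real.mul_rpow (by positivity) (Finset.sum_nonneg fun ε _ => by positivity)]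
    congr 1
    rw [PiLp.norm_eq_sum hpt]
    rfl

lemma lpNormE_nonneg {n : ℕ} (p : ℝ≥0∞) (hp : 1 ≤ p) (f : (Fin n → Bool) → X) :
    0 ≤ lpNormE p f := by
  haveI : Fact (1 ≤ p) := ⟨hp⟩
  rw [lpNormE_eq_norm p hp]
  positivity

lemma lpNormE_smul {n : ℕ} (p : ℝ≥0∞) (hp : 1 ≤ p) (c : ℝ) (f : (Fin n → Bool) → X) :
    lpNormE p (c • f) = |c| * lpNormE p f := by
  haveI : Fact (1 ≤ p) := ⟨hp⟩
  rw [lpNormE_eq_norm p hp, lpNormE_eq_norm p hp]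
  have h : (WithLp.equiv p ((Fin n → Bool) → X)).symm (c • f)
      = c • (WithLp.equiv p ((Fin n → Bool) → X)).symm f := rfl
  rw [h, norm_smul, Real.norm_eq_abs]
  ring

lemma lpNormE_sum_le {n : ℕ} (p : ℝ≥0∞) (hp : 1 ≤ p) {ι : Type*} (s : Finset ι)
    (g : ι → (Fin n → Bool) → X) :
    lpNormE p (fun ε => ∑ j ∈ s, g j ε) ≤ ∑ j ∈ s, lpNormE p (g j) := by
  haveI : Fact (1 ≤ p) := ⟨hp⟩
  rw [lpNormE_eq_norm p hp]
  have heq : (WithLp.equiv p ((Fin n → Bool) → X)).symm (fun ε => ∑ j ∈ s, g j ε)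
      = ∑ j ∈ s, (WithLp.equiv p ((Fin n → Bool) → X)).symm (g j) := by
    rw [← Finset.sum_fn]
    exact WithLp.toLp_sum p (s := s) (f := g)
  rw [heq]
  calc ((2 ^ n : ℝ)⁻¹) ^ (1 / p.toReal) *
        ‖∑ j ∈ s, (WithLp.equiv p ((Fin n → Bool) → X)).symm (g j)‖
      ≤ ((2 ^ n : ℝ)⁻¹) ^ (1 / p.toReal) *
        ∑ j ∈ s, ‖(WithLp.equiv p ((Fin n → Bool) → X)).symm (g j)‖ := by
        apply mul_le_mul_of_nonneg_left (norm_sum_le _ _) (by positivity)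
    _ = ∑ j ∈ s, lpNormE p (g j) := by
        rw [Finset.mul_sum]
        exact Finset.sum_congr rfl fun j _ => (lpNormE_eq_norm p hp (g j)).symm

lemma lpNormE_comp_equiv {n : ℕ} (p : ℝ≥0∞) (e : (Fin n → Bool) ≃ (Fin n → Bool))
    (f : (Fin n → Bool) → X) :
    lpNormE p (fun ε => f (e ε)) = lpNormE p f := by
  by_cases h : p = ⊤
  · subst h
    rw [lpNormE, if_pos rfl, lpNormE, if_pos rfl, linfNorm, linfNorm, iSup, iSup]
    congr 1
    exact e.surjective.range_comp fun ε => ‖f ε‖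
  · rw [lpNormE, if_neg h, lpNormE, if_neg h, lpNorm, lpNorm]
    congr 2
    exact Fintype.sum_equiv e _ _ fun ε => rfl

lemma lpNormE_noise_le {n : ℕ} (p : ℝ≥0∞) (hp : 1 ≤ p) {ρ : ℝ} (hρ : |ρ| ≤ 1)
    (f : (Fin n → Bool) → X) :
    lpNormE p (noise ρ f) ≤ lpNormE p f := by
  have h0 : noise ρ f = fun ε => ∑ δ : Fin n → Bool,
      (wt ρ δ • fun ε' => f (bmul ε' δ)) ε := rfl
  rw [h0]
  calc lpNormE p (fun ε => ∑ δ : Fin n → Bool, (wt ρ δ • fun ε' => f (bmul ε' δ)) ε)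
      ≤ ∑ δ : Fin n → Bool, lpNormE p (wt ρ δ • fun ε' => f (bmul ε' δ)) :=
        lpNormE_sum_le p hp _ _
    _ = ∑ δ : Fin n → Bool, wt ρ δ * lpNormE p f := by
        refine Finset.sum_congr rfl fun δ _ => ?_
        rw [lpNormE_smul p hp, abs_of_nonneg (wt_nonneg hρ δ)]
        congr 1
        exact lpNormE_comp_equiv p (bmulEquiv δ) f
    _ = lpNormE p f := by rw [← Finset.sum_mul, wt_sum, one_mul]

end Aux

section Coef

open Finset Polynomial Real

lemma derivative_finset_prod {ι : Type*} [DecidableEq ι] (s : Finset ι) (f : ι → ℝ[X]) :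
    derivative (∏ i ∈ s, f i) = ∑ i ∈ s, (∏ j ∈ s.erase i, f j) * derivative (f i) := by
  induction s using Finset.induction with
  | empty => simp
  | @insert a s ha ih =>
      rw [Finset.prod_insert ha, derivative_mul, ih, Finset.sum_insert ha,
        Finset.erase_insert ha, Finset.mul_sum]
      congr 1
      · exact mul_comm _ _
      · refine Finset.sum_congr rfl fun i hi => ?_
        rw [Finset.erase_insert_of_ne (by rintro rfl; exact ha hi),
          Finset.prod_insert (fun h => ha (Finset.mem_of_mem_erase h)), mul_assoc]

/-- interpolation node: extremum of the Chebyshev polynomial -/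
def node (d k : ℕ) : ℝ := Real.cos (k * π / d)

/-- coefficient: derivative of the Lagrange basis polynomial at `1` -/
def coef (d k : ℕ) : ℝ :=
  eval 1 (derivative (Lagrange.basis (Finset.range (d + 1)) (node d) k))

variable {d : ℕ}

lemma node_zero (d : ℕ) : node d 0 = 1 := by simp [node]

lemma node_strict_anti (hd : 1 ≤ d) {a b : ℕ} (ha : a ≤ d) (hb : b ≤ d) (hab : a < b) :
    node d b < node d a := by
  have hd' : (0:ℝ) < d := by positivity
  apply Real.cos_lt_cos_of_nonneg_of_le_pi
  · positivity
  · rw [div_le_iff₀ hd']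
    calc (b:ℝ) * π ≤ d * π := by
          apply mul_le_mul_of_nonneg_right _ Real.pi_pos.le
          exact_mod_cast hb
    _ = π * d := by ring
  · have h : (a:ℝ) < b := by exact_mod_cast hab
    have hπ := Real.pi_pos
    apply div_lt_div_of_pos_right ?_ hd'
    nlinarith

lemma node_injOn (hd : 1 ≤ d) : Set.InjOn (node d) (Finset.range (d + 1)) := by
  intro a ha b hb hab
  simp only [Finset.coe_range, Set.mem_Iio] at ha hb
  by_contra hne
  rcases lt_or_gt_of_ne hne with h | h
  · exact absurd hab (node_strict_anti hd (by omega) (by omega) h).ne'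
  · exact absurd hab (node_strict_anti hd (by omega) (by omega) h).ne

lemma node_lt_one (hd : 1 ≤ d) {k : ℕ} (hk1 : 1 ≤ k) (hkd : k ≤ d) : node d k < 1 := by
  rw [← node_zero d]
  exact node_strict_anti hd (by omega) hkd (by omega)

/-- the interpolation identity for the derivative at `1` -/
lemma deriv_eval_one (hd : 1 ≤ d) (q : ℝ[X]) (hq : q.degree < (d + 1 : ℕ)) :
    eval 1 (derivative q) = ∑ k ∈ Finset.range (d + 1), coef d k * eval (node d k) q := by
  have hcard : q.degree < (Finset.range (d + 1)).card := by
    rwa [Finset.card_range]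
  have hinterp := Lagrange.eq_interpolate (node_injOn hd) hcard
  conv_lhs => rw [hinterp]
  rw [Lagrange.interpolate_apply, derivative_sum, eval_finset_sum]
  exact Finset.sum_congr rfl fun k _ => by
    rw [derivative_C_mul, eval_mul, eval_C, coef, mul_comm]

lemma power_identity (hd : 1 ≤ d) {m : ℕ} (hm : m ≤ d) :
    ∑ k ∈ Finset.range (d + 1), coef d k * node d k ^ m = m := by
  have h := deriv_eval_one hd (X ^ m) (by
    rw [degree_X_pow]
    exact_mod_cast Nat.lt_succ_of_le hm)
  rw [derivative_X_pow] at h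
  simp only [eval_mul, eval_C, eval_pow, eval_X, eval_one, one_pow, mul_one] at h
  rw [← h]

open Polynomial.Chebyshev in
lemma chebT_degree_le : ∀ m : ℕ, (T ℝ (m : ℤ)).degree ≤ (m : ℕ) := by
  have key : ∀ m : ℕ, (T ℝ (m : ℤ)).degree ≤ m ∧ (T ℝ ((m+1 : ℕ) : ℤ)).degree ≤ (m+1 : ℕ) := by
    intro m
    induction m with
    | zero =>
        constructor
        · simp [T_zero, degree_one_le]
        · simpa [T_one] using degree_X_le
    | succ m ih =>
        refine ⟨ih.2, ?_⟩
        have h2 : ((m + 2 : ℕ) : ℤ) = (m : ℤ) + 2 := by push_cast; ring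
        rw [h2, T_add_two]
        apply le_trans (degree_sub_le _ _)
        apply max_le
        · apply le_trans (degree_mul_le _ _)
          have h1 : (2 * X : ℝ[X]).degree ≤ 1 := by
            apply le_trans (degree_mul_le _ _)
            calc (2 : ℝ[X]).degree + (X : ℝ[X]).degree ≤ 0 + 1 := by
                  apply add_le_add
                  · exact degree_le_of_natDegree_le (by simp)
                  · exact degree_X_le
              _ = 1 := by norm_num
          calc (2 * X : ℝ[X]).degree + (T ℝ ((m:ℤ)+1)).degree
              ≤ 1 + (m + 1 : ℕ) := by
                apply add_le_add h1
                have := ih.2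
                rwa [show (((m+1 : ℕ)) : ℤ) = (m : ℤ) + 1 by push_cast; ring] at this
            _ ≤ ((m + 2 : ℕ) : WithBot ℕ) := by
                norm_cast
                omega
        · refine le_trans ih.1 ?_
          norm_cast
          omega
  exact fun m => (key m).1

open Polynomial.Chebyshev in
lemma chebU_eval_one : ∀ m : ℕ, eval 1 (U ℝ (m : ℤ)) = m + 1 := by
  have key : ∀ m : ℕ, eval 1 (U ℝ (m : ℤ)) = m + 1 ∧ eval 1 (U ℝ ((m+1 : ℕ) : ℤ)) = m + 2 := by
    intro m
    induction m with
    | zero => constructor <;> simp [U_zero, U_one]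
    | succ m ih =>
        refine ⟨by rw [ih.2]; push_cast; ring, ?_⟩
        have h2 : ((m + 2 : ℕ) : ℤ) = ((m : ℤ) + 2) := by push_cast; ring
        rw [h2, U_add_two]
        simp only [eval_sub, eval_mul, eval_ofNat, eval_X]
        have e1 := ih.1
        have e2 := ih.2
        rw [show (((m+1 : ℕ)) : ℤ) = (m : ℤ) + 1 by push_cast; ring] at e2
        rw [e2, e1]
        push_cast
        ring
  exact fun m => (key m).1

open Polynomial.Chebyshev in
lemma chebT_deriv_one (d : ℕ) (hd : 1 ≤ d) :
    eval 1 (derivative (T ℝ (d : ℤ))) = (d : ℝ) ^ 2 := by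
  rw [T_derivative_eq_U]
  have h1 : ((d : ℤ) - 1) = ((d - 1 : ℕ) : ℤ) := by omega
  rw [h1, eval_mul, chebU_eval_one (d - 1)]
  have h2 : ((d - 1 : ℕ) : ℝ) + 1 = d := by
    have h3 : (1:ℕ) ≤ d := hd
    push_cast [Nat.cast_sub h3]
    ring
  rw [h2]
  push_cast
  simp only [eval_natCast]
  ring

lemma chebT_eval_node (hd : 1 ≤ d) (k : ℕ) :
    eval (node d k) (Polynomial.Chebyshev.T ℝ (d : ℤ)) = (-1 : ℝ) ^ k := by
  rw [node, Polynomial.Chebyshev.T_real_cos]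
  have hd0 : (d : ℝ) ≠ 0 := by positivity
  have h1 : ((d : ℤ) : ℝ) * (k * π / d) = k * π := by
    push_cast
    field_simp
  rw [h1]
  have h2 := Real.cos_nat_mul_pi_sub 0 k
  simpa using h2

lemma cheb_sum (hd : 1 ≤ d) :
    ∑ k ∈ Finset.range (d + 1), coef d k * (-1 : ℝ) ^ k = (d : ℝ) ^ 2 := by
  have hdeg : (Polynomial.Chebyshev.T ℝ (d : ℤ)).degree < (d + 1 : ℕ) := by
    refine lt_of_le_of_lt (chebT_degree_le d) ?_
    exact_mod_cast Nat.lt_succ_self d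
  have h := deriv_eval_one hd (Polynomial.Chebyshev.T ℝ (d : ℤ)) hdeg
  rw [chebT_deriv_one d hd] at h
  rw [h]
  exact Finset.sum_congr rfl fun k _ => by rw [chebT_eval_node hd]

lemma coef_eval_formula (k : ℕ) :
    coef d k = ∑ j ∈ (Finset.range (d + 1)).erase k,
      (∏ l ∈ ((Finset.range (d + 1)).erase k).erase j,
        ((node d k - node d l)⁻¹ * (1 - node d l))) * (node d k - node d j)⁻¹ := by
  rw [coef, Lagrange.basis, derivative_finset_prod, eval_finset_sum]
  refine Finset.sum_congr rfl fun j hj => ?_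
  rw [eval_mul, eval_prod]
  congr 1
  · refine Finset.prod_congr rfl fun l hl => ?_
    rw [Lagrange.basisDivisor, eval_mul, eval_C, eval_sub, eval_X, eval_C]
  · rw [Lagrange.basisDivisor, derivative_C_mul, derivative_sub, derivative_X, derivative_C,
      sub_zero, mul_one, eval_C]

lemma node_le_bounds {k : ℕ} (hk : k ∈ Finset.range (d + 1)) : k ≤ d := by
  simpa [Nat.lt_succ_iff] using hk

lemma coef_sign (hd : 1 ≤ d) {k : ℕ} (hk : k ∈ Finset.range (d + 1)) :
    0 ≤ (-1 : ℝ) ^ k * coef d k := by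
  have hkd : k ≤ d := node_le_bounds hk
  rcases Nat.eq_zero_or_pos k with hk0 | hk1
  · subst hk0
    simp only [pow_zero, one_mul]
    rw [coef_eval_formula]
    refine Finset.sum_nonneg fun j hj => ?_
    rw [Finset.mem_erase, Finset.mem_range, Nat.lt_succ_iff] at hj
    simp only [node_zero]
    apply mul_nonneg
    · refine Finset.prod_nonneg fun l hl => ?_
      rw [Finset.mem_erase, Finset.mem_erase, Finset.mem_range, Nat.lt_succ_iff] at hl
      have hlt : node d l < 1 := node_lt_one hd (by omega) hl.2.2
      exact mul_nonneg (inv_nonneg.mpr (by linarith)) (by linarith)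
    · have hlt : node d j < 1 := node_lt_one hd (by omega) hj.2
      exact inv_nonneg.mpr (by linarith)
  · -- case 1 ≤ k
    have hk0 : k ≠ 0 := by omega
    have h0mem : (0 : ℕ) ∈ (Finset.range (d + 1)).erase k :=
      Finset.mem_erase.mpr ⟨Ne.symm hk0, Finset.mem_range.mpr (by omega)⟩
    set S : Finset ℕ := ((Finset.range (d + 1)).erase k).erase 0 with hSdef
    have memS : ∀ l ∈ S, l ≠ 0 ∧ l ≠ k ∧ l ≤ d := by
      intro l hl
      rw [hSdef, Finset.mem_erase, Finset.mem_erase, Finset.mem_range, Nat.lt_succ_iff] at hl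
      exact ⟨hl.1, hl.2.1, hl.2.2⟩
    have hco1 : coef d k = (∏ l ∈ S, ((node d k - node d l)⁻¹ * (1 - node d l))) *
        (node d k - 1)⁻¹ := by
      rw [coef_eval_formula]
      refine (Finset.sum_eq_single_of_mem 0 h0mem ?_).trans ?_
      · intro j hj hj0
        apply mul_eq_zero_of_left
        apply Finset.prod_eq_zero (i := 0)
        · exact Finset.mem_erase.mpr ⟨Ne.symm hj0, h0mem⟩
        · rw [node_zero]; ring
      · rw [node_zero]
    have hsplit : ∏ l ∈ S, ((node d k - node d l)⁻¹ * (1 - node d l)) =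
        ((∏ l ∈ S.filter (· < k), (node d k - node d l)⁻¹) *
          ∏ l ∈ S.filter (fun l => ¬ l < k), (node d k - node d l)⁻¹) *
          ∏ l ∈ S, (1 - node d l) := by
      rw [Finset.prod_mul_distrib, Finset.prod_filter_mul_prod_filter_not S (· < k)]
    have hS1 : S.filter (· < k) = Finset.Ioo 0 k := by
      ext l
      rw [Finset.mem_filter, hSdef, Finset.mem_erase, Finset.mem_erase, Finset.mem_range,
        Finset.mem_Ioo]
      omega
    have hcard : (S.filter (· < k)).card = k - 1 := by rw [hS1, Nat.card_Ioo]; omega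
    have hneg : ∏ l ∈ S.filter (· < k), (node d k - node d l)⁻¹ =
        (-1 : ℝ) ^ (k - 1) * ∏ l ∈ S.filter (· < k), (node d l - node d k)⁻¹ := by
      rw [← hcard, ← Finset.prod_const, ← Finset.prod_mul_distrib]
      refine Finset.prod_congr rfl fun l hl => ?_
      rw [neg_one_mul, ← inv_neg, neg_sub]
    have hE : (node d k - 1)⁻¹ = -((1 - node d k)⁻¹) := by
      rw [← neg_sub (1 : ℝ) (node d k), inv_neg]
    have hA : 0 ≤ ∏ l ∈ S.filter (· < k), (node d l - node d k)⁻¹ := by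
      refine Finset.prod_nonneg fun l hl => ?_
      rw [Finset.mem_filter] at hl
      obtain ⟨hl0, hlk, hld⟩ := memS l hl.1
      have := node_strict_anti hd (by omega : l ≤ d) hkd hl.2
      exact inv_nonneg.mpr (by linarith)
    have hB : 0 ≤ ∏ l ∈ S.filter (fun l => ¬ l < k), (node d k - node d l)⁻¹ := by
      refine Finset.prod_nonneg fun l hl => ?_
      rw [Finset.mem_filter] at hl
      obtain ⟨hl0, hlk, hld⟩ := memS l hl.1
      have hkl : k < l := by omega
      have := node_strict_anti hd hkd hld hkl
      exact inv_nonneg.mpr (by linarith)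
    have hC : 0 ≤ ∏ l ∈ S, (1 - node d l) := by
      refine Finset.prod_nonneg fun l hl => ?_
      obtain ⟨hl0, hlk, hld⟩ := memS l hl
      have := node_lt_one hd (by omega) hld
      linarith
    have hD : 0 ≤ (1 - node d k)⁻¹ := by
      have := node_lt_one hd hk1 hkd
      exact inv_nonneg.mpr (by linarith)
    have h1 : (-1 : ℝ) ^ (k - 1) * (-1) = (-1) ^ k := by
      rw [← pow_succ]
      congr 1
      omega
    have h2 : (-1 : ℝ) ^ k * (-1) ^ k = 1 := by
      rw [← pow_add]
      exact Even.neg_one_pow ⟨k, rfl⟩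
    have key : (-1 : ℝ) ^ k * coef d k =
        (∏ l ∈ S.filter (· < k), (node d l - node d k)⁻¹) *
        ((∏ l ∈ S.filter (fun l => ¬ l < k), (node d k - node d l)⁻¹) *
        ((∏ l ∈ S, (1 - node d l)) * (1 - node d k)⁻¹)) := by
      calc (-1 : ℝ) ^ k * coef d k
          = ((-1 : ℝ) ^ k * ((-1 : ℝ) ^ (k - 1) * (-1))) *
            ((∏ l ∈ S.filter (· < k), (node d l - node d k)⁻¹) *
            ((∏ l ∈ S.filter (fun l => ¬ l < k), (node d k - node d l)⁻¹) *
            ((∏ l ∈ S, (1 - node d l)) * (1 - node d k)⁻¹))) := by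
            rw [hco1, hsplit, hneg, hE]; ring
        _ = _ := by rw [h1, h2, one_mul]
    rw [key]
    exact mul_nonneg hA (mul_nonneg hB (mul_nonneg hC hD))

lemma coef_abs_sum (hd : 1 ≤ d) :
    ∑ k ∈ Finset.range (d + 1), |coef d k| = (d : ℝ) ^ 2 := by
  rw [← cheb_sum hd]
  refine Finset.sum_congr rfl fun k hk => ?_
  have hs := coef_sign hd hk
  have habs : |coef d k| = |(-1 : ℝ) ^ k * coef d k| := by
    rw [abs_mul, abs_pow, abs_neg, abs_one, one_pow, one_mul]
  rw [habs, abs_of_nonneg hs, mul_comm]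

end Coef


/-- **Bernstein–Markov inequality for the hypercube Laplacian** in a general complex
Banach space: `‖Δf‖_p ≤ d² ‖f‖_p` for functions of degree at most `d`. -/
theorem stmt3 {X : Type*} [NormedAddCommGroup X] [NormedSpace ℂ X] [CompleteSpace X]
    (n d : ℕ) (hd : 1 ≤ d) (hdn : d ≤ n) (p : ℝ≥0∞) (hp : 1 ≤ p)
    (f : (Fin n → Bool) → X) (hf : degLE f d) :
    lpNormE p (lap f) ≤ (d : ℝ) ^ 2 * lpNormE p f := by
  classical
  have hkey : lap f = fun ε => ∑ k ∈ Finset.range (d + 1),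
      (coef d k • noise (node d k) f) ε := by
    funext ε
    have h1 : ∀ k, (coef d k • noise (node d k) f) ε
        = ∑ A : Finset (Fin n), (coef d k * node d k ^ A.card) • walsh A ε • coeff f A := by
      intro k
      show coef d k • noise (node d k) f ε = _
      rw [noise_eq, Finset.smul_sum]
      exact Finset.sum_congr rfl fun A _ => by rw [smul_smul]
    rw [Finset.sum_congr rfl fun k _ => h1 k, Finset.sum_comm]
    rw [lap]
    refine Finset.sum_congr rfl fun A _ => ?_
    rw [← Finset.sum_smul]
    by_cases hA : A.card ≤ d
    · rw [power_identity hd hA]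
    · rw [hf A (by omega)]
      simp
  rw [hkey]
  calc lpNormE p (fun ε => ∑ k ∈ Finset.range (d + 1), (coef d k • noise (node d k) f) ε)
      ≤ ∑ k ∈ Finset.range (d + 1), lpNormE p (coef d k • noise (node d k) f) :=
        lpNormE_sum_le p hp _ _
    _ = ∑ k ∈ Finset.range (d + 1), |coef d k| * lpNormE p (noise (node d k) f) := by
        exact Finset.sum_congr rfl fun k _ => lpNormE_smul p hp _ _
    _ ≤ ∑ k ∈ Finset.range (d + 1), |coef d k| * lpNormE p f := by
        refine Finset.sum_le_sum fun k _ => ?_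
        refine mul_le_mul_of_nonneg_left ?_ (abs_nonneg _)
        refine lpNormE_noise_le p hp ?_ f
        rw [node, abs_le]
        exact ⟨Real.neg_one_le_cos _, Real.cos_le_one _⟩
    _ = (d : ℝ) ^ 2 * lpNormE p f := by rw [← Finset.sum_mul, coef_abs_sum hd]

end HammingCube
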